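/- arXiv:1712.04369 — 4 statements merged into one kernel-verified Lean document; each statement's English description precedes it below -/
import Mathlib

section
/- Let V be a complex vector space of dimension c, and consider data X = (B₀,…,B_{n-1},v₁,…,v_c) with B_i ∈ End(V) pairwise commuting nilpotent endomorphisms and v_j ∈ V, with X stable. Then the space of all such stable data is path connected: any stable datum X can be joined by a continuous path within the space of stable data (with all B_i nilpotent and pairwise commuting) to the datum (0,…,0,e₁,…,e_c), where e₁,…,e_c is a fixed basis of V, possibly after acting by an element of GL(V). -/
/-!
Fix the commuting nilpotent endomorphisms `B`. Stability of `(B, v)` says that the vectors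
`a v_j`, for `a` in the algebra generated by the `B_i`, span `V`; picking a basis among them,
stability of `(B, v + z (w - v))` fails only at the roots of a determinant that does not vanish
at `z = 0`. The complement of finitely many points of `ℂ` being path connected, `(B, v)` can be
joined to `(B, w)` for any stable `(B, w)`, in particular to `(B, e)` with `e` the standard basis.
Since `e` alone spans `V`, the path `t ↦ (t B, e)` then stays stable down to `(0, e)`.
-/

open Matrix Module Polynomial Set Submodule

section Stability

variable {K ι κ m : Type*} [CommRing K] [Fintype m]

def IsStableDatum (B : ι → Matrix m m K) (v : κ → m → K) : Prop :=
  ∀ S : Submodule K (m → K), (∀ i, ∀ x ∈ S, B i *ᵥ x ∈ S) → (∀ j, v j ∈ S) → S = ⊤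

theorem IsStableDatum.of_span_eq_top (B : ι → Matrix m m K) {v : κ → m → K}
    (hv : span K (range v) = ⊤) : IsStableDatum B v := fun _ _ hvS =>
  top_le_iff.1 (hv ▸ span_le.2 (range_subset_iff.2 hvS))

theorem mulVec_mem_of_mem_adjoin [DecidableEq m] {B : ι → Matrix m m K}
    {S : Submodule K (m → K)} (hS : ∀ i, ∀ x ∈ S, B i *ᵥ x ∈ S) {a : Matrix m m K}
    (ha : a ∈ Algebra.adjoin K (range B)) {x : m → K} (hx : x ∈ S) : a *ᵥ x ∈ S := by
  induction ha using Algebra.adjoin_induction generalizing x with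
  | mem b hb => obtain ⟨i, rfl⟩ := hb; exact hS i x hx
  | algebraMap r =>
    rw [Algebra.algebraMap_eq_smul_one, smul_mulVec, one_mulVec]
    exact S.smul_mem r hx
  | add a b _ _ iha ihb => rw [add_mulVec]; exact S.add_mem (iha hx) (ihb hx)
  | mul a b _ _ iha ihb => rw [← mulVec_mulVec]; exact iha (ihb hx)

theorem isStableDatum_iff_span_adjoin_mulVec [DecidableEq m] {B : ι → Matrix m m K}
    {v : κ → m → K} : IsStableDatum B v ↔
      span K (range fun p : Algebra.adjoin K (range B) × κ => (p.1 : Matrix m m K) *ᵥ v p.2)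
        = ⊤ := by
  set T := span K (range fun p : Algebra.adjoin K (range B) × κ => (p.1 : Matrix m m K) *ᵥ v p.2)
  constructor
  · refine fun hv => hv T (fun i => ?_) fun j => subset_span ⟨(1, j), one_mulVec _⟩
    have hT : T ≤ T.comap (B i).mulVecLin := span_le.2 <| by
      rintro _ ⟨⟨a, j⟩, rfl⟩
      exact subset_span ⟨(⟨B i * a, mul_mem (Algebra.subset_adjoin ⟨i, rfl⟩) a.2⟩, j),
        (mulVec_mulVec _ _ _).symm⟩
    exact fun x hx => hT hx
  · intro hT S hS hvS
    refine top_le_iff.1 (hT ▸ span_le.2 ?_)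
    rintro _ ⟨⟨a, j⟩, rfl⟩
    exact mulVec_mem_of_mem_adjoin hS a.2 (hvS j)

end Stability

theorem Matrix.finite_setOf_det_one_add_smul_eq_zero {K m : Type*} [CommRing K] [IsDomain K]
    [Fintype m] [DecidableEq m] (M : Matrix m m K) : {z : K | (1 + z • M).det = 0}.Finite := by
  set p : K[X] := (1 + (X : K[X]) • M.map C).det
  have hp : ∀ z, p.eval z = (1 + z • M).det := fun z => by
    rw [← coe_evalRingHom, RingHom.map_det]
    congr 1
    ext i j
    simp [one_apply, apply_ite, mul_comm (M _ _)]
  have hp0 : p ≠ 0 := fun h => by simpa [h] using hp 0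
  simpa [hp] using Polynomial.finite_setOfPred_isRoot hp0

theorem finite_setOf_span_add_smul_ne_top {K V ι : Type*} [Field K] [AddCommGroup V]
    [Module K V] [FiniteDimensional K V] {x : ι → V} (hx : span K (range x) = ⊤) (y : ι → V) :
    {z : K | span K (range (x + z • y)) ≠ ⊤}.Finite := by
  classical
  let e := Basis.ofSpan hx.ge
  have he : ∀ k, e k ∈ range x := fun k => Basis.ofSpan_subset hx.ge ⟨k, rfl⟩
  clear_value e
  have := FiniteDimensional.fintypeBasisIndex e
  choose g hg using he
  refine (finite_setOf_det_one_add_smul_eq_zero (e.toMatrix (y ∘ g))).subset fun z hz => ?_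
  simp only [mem_ofPred_eq] at hz ⊢
  contrapose! hz
  have hdet : e.det ((x + z • y) ∘ g) = (1 + z • e.toMatrix (y ∘ g)).det := by
    rw [e.det_apply]
    congr 1
    ext i j
    simp [Basis.toMatrix_apply, hg, one_apply, Finsupp.single_apply, eq_comm]
  have hbasis := e.is_basis_iff_det.2 (hdet ▸ isUnit_iff_ne_zero.2 hz)
  exact top_le_iff.1 (hbasis.2 ▸ span_mono (range_comp_subset_range _ _))

theorem IsStableDatum.finite_setOf_not_add_smul {K ι κ m : Type*} [Field K] [Fintype m]
    [DecidableEq m] {B : ι → Matrix m m K} {v : κ → m → K} (hv : IsStableDatum B v)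
    (u : κ → m → K) : {z : K | ¬IsStableDatum B (v + z • u)}.Finite := by
  rw [isStableDatum_iff_span_adjoin_mulVec] at hv
  refine (finite_setOf_span_add_smul_ne_top hv fun p => (p.1 : Matrix m m K) *ᵥ u p.2).subset
    fun z hz => ?_
  have hfam : (fun p : Algebra.adjoin K (range B) × κ => (p.1 : Matrix m m K) *ᵥ (v + z • u) p.2)
      = (fun p => (p.1 : Matrix m m K) *ᵥ v p.2) + z • fun p => (p.1 : Matrix m m K) *ᵥ u p.2 := by
    funext p
    simp [mulVec_add, mulVec_smul]
  rwa [mem_ofPred_eq, isStableDatum_iff_span_adjoin_mulVec, hfam] at hz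

def commutingNilpotentStableData (ι κ m : Type*) [Fintype m] [DecidableEq m] :
    Set ((ι → Matrix m m ℂ) × (κ → m → ℂ)) :=
  {X | (∀ i, IsNilpotent (X.1 i)) ∧ (∀ i j, Commute (X.1 i) (X.1 j)) ∧ IsStableDatum X.1 X.2}

section Topology

variable {ι κ m : Type*} [Fintype m] [DecidableEq m]

theorem joinedIn_commutingNilpotentStableData_of_fst_eq {X Y : (ι → Matrix m m ℂ) × (κ → m → ℂ)}
    (hX : X ∈ commutingNilpotentStableData ι κ m) (hY : Y ∈ commutingNilpotentStableData ι κ m)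
    (hXY : X.1 = Y.1) : JoinedIn (commutingNilpotentStableData ι κ m) X Y := by
  let f : ℂ → (ι → Matrix m m ℂ) × (κ → m → ℂ) := fun z => (X.1, X.2 + z • (Y.2 - X.2))
  have hU : IsPathConnected {z : ℂ | IsStableDatum X.1 (X.2 + z • (Y.2 - X.2))} := by
    simpa only [compl_ofPred, not_not] using
      (hX.2.2.finite_setOf_not_add_smul _).countable.isPathConnected_compl_of_one_lt_rank
        (by rw [Complex.rank_real_complex]; norm_num)
  have h0 : f 0 = X := by simp [f]
  have h1 : f 1 = Y := by simp [f, hXY]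
  have hpath := (hU.joinedIn 0 (by simpa using hX.2.2) 1 (by simpa [hXY] using hY.2.2)).map
    (f := f) (by fun_prop)
  rw [h0, h1] at hpath
  refine hpath.mono ?_
  rintro _ ⟨z, hz, rfl⟩
  exact ⟨hX.1, hX.2.1, hz⟩

theorem joinedIn_commutingNilpotentStableData_zero {X : (ι → Matrix m m ℂ) × (κ → m → ℂ)}
    (hX : X ∈ commutingNilpotentStableData ι κ m) (hspan : span ℂ (range X.2) = ⊤) :
    JoinedIn (commutingNilpotentStableData ι κ m) X (0, X.2) := by
  let f : ℂ → (ι → Matrix m m ℂ) × (κ → m → ℂ) := fun z => (z • X.1, X.2)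
  have hpath := (isPathConnected_univ.joinedIn 1 trivial 0 trivial).map (f := f) (by fun_prop)
  rw [show f 1 = X by simp [f], show f 0 = (0, X.2) by simp [f]] at hpath
  refine hpath.mono ?_
  rintro _ ⟨z, -, rfl⟩
  exact ⟨fun i => (hX.1 i).smul z, fun i j => ((hX.2.1 i j).smul_left z).smul_right z,
    .of_span_eq_top _ hspan⟩

end Topology

theorem stmt5_general (n c : ℕ) :
    IsPathConnected {X : (Fin n → Matrix (Fin c) (Fin c) ℂ) × (Fin c → Fin c → ℂ) |
      (∀ i, IsNilpotent (X.1 i)) ∧ (∀ i j, Commute (X.1 i) (X.1 j)) ∧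
      ∀ S : Submodule ℂ (Fin c → ℂ),
        (∀ i, ∀ x ∈ S, (X.1 i).mulVec x ∈ S) → (∀ j, X.2 j ∈ S) → S = ⊤} := by
  change IsPathConnected (commutingNilpotentStableData (Fin n) (Fin c) (Fin c))
  have he := (Pi.basisFun ℂ (Fin c)).span_eq
  refine ⟨(0, Pi.basisFun ℂ (Fin c)), ⟨fun _ => .zero, fun _ _ => .zero_left _,
    .of_span_eq_top _ he⟩, fun X hX => ?_⟩
  have hXe : (X.1, ⇑(Pi.basisFun ℂ (Fin c))) ∈ commutingNilpotentStableData _ _ _ :=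
    ⟨hX.1, hX.2.1, .of_span_eq_top _ he⟩
  exact (joinedIn_commutingNilpotentStableData_of_fst_eq hX hXe rfl).trans
    (joinedIn_commutingNilpotentStableData_zero hXe he) |>.symm

/-- The space of stable ADHM data `(B₀,…,B_{n-1},v₁,…,v_c)` with all `B_i` nilpotent and
pairwise commuting (case `r = c`) is path connected. -/
theorem stmt5 (n c : ℕ) (hn : 0 < n) (hc : 0 < c) :
    IsPathConnected {X : (Fin n → Matrix (Fin c) (Fin c) ℂ) × (Fin c → Fin c → ℂ) |
      (∀ i, IsNilpotent (X.1 i)) ∧ (∀ i j, Commute (X.1 i) (X.1 j)) ∧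
      ∀ S : Submodule ℂ (Fin c → ℂ),
        (∀ i, ∀ x ∈ S, (X.1 i).mulVec x ∈ S) → (∀ j, X.2 j ∈ S) → S = ⊤} :=
  stmt5_general n c
end

section
/- Let V be a complex vector space of dimension c, let B₀,…,B_{n-1} ∈ End(V) be pairwise commuting and nilpotent, and let v₁,…,v_r ∈ V with r ≥ n, such that the datum (B₀,…,B_{n-1},v₁,…,v_r) is stable. If v₁,…,v_k is a maximal linearly independent sublist of the v_j's, then there exist vectors w₁,…,w_{c-k}, each of the form B₀^{α₀}⋯B_{n-1}^{α_{n-1}}v_j for some nonnegative exponents and some 1 ≤ j ≤ k, such that v₁,…,v_k, w₁,…,w_{c-k} is a basis of V. -/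
/-!
Commutation of the `B_i` makes `B_i` applied to an ordered monomial `B^α v_j` again an ordered
monomial, so the set of all vectors `B^α v_j` with `j ≤ k` is invariant under every `B_i`; it
contains every `v_j` in its span by maximality, so by stability it spans `V`. A linearly
independent family lying in a spanning set extends, inside that set, to a basis, and counting
dimensions shows exactly `c - k` vectors are added.
-/

open Submodule Set

section Extension

variable {K V : Type*} [DivisionRing K] [AddCommGroup V] [Module K V] [Module.Finite K V]

theorem LinearIndependent.exists_sumElim_of_range_subset {ι : Type*}
    {f : ι → V} (hf : LinearIndependent K f) {T : Set V} (hfT : range f ⊆ T) :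
    ∃ (m : ℕ) (w : Fin m → V), range w ⊆ T ∧ LinearIndependent K (Sum.elim f w) ∧
      span K (range (Sum.elim f w)) = span K T := by
  have hs : LinearIndepOn K id (range f) := (linearIndepOn_id_range_iff hf.injective).mpr hf
  set b := hs.extend hfT
  have hb : LinearIndepOn K id b := hs.linearIndepOn_extend hfT
  have : Finite b := LinearIndependent.finite hb
  let e := Finite.equivFin ↥(b \ range f)
  let w : Fin _ → V := fun i => (e.symm i : V)
  have hw : range w = b \ range f := by
    simp only [w, range_comp' Subtype.val e.symm, e.symm.range_eq_univ, image_univ,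
      Subtype.range_coe]
  have hrange : range (Sum.elim f w) = b := by
    rw [Sum.elim_range, hw, union_sdiff_cancel (hs.subset_extend hfT)]
  have hinj : Function.Injective (Sum.elim f w) :=
    hf.injective.sumElim (Subtype.val_injective.comp e.symm.injective)
      fun j i h => (e.symm i).2.2 ⟨j, h⟩
  refine ⟨_, w, hw.trans_subset (sdiff_subset.trans (hs.extend_subset hfT)), ?_, ?_⟩
  · exact (linearIndepOn_id_range_iff hinj).mp (by rwa [hrange])
  · rw [hrange, hs.span_extend_eq_span hfT]

theorem LinearIndependent.exists_sumElim_basis_of_span_eq_top {c k : ℕ}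
    (hdim : Module.finrank K V = c) {f : Fin k → V} (hf : LinearIndependent K f) {T : Set V}
    (hfT : range f ⊆ T) (hT : span K T = ⊤) :
    ∃ w : Fin (c - k) → V, range w ⊆ T ∧ LinearIndependent K (Sum.elim f w) ∧
      span K (range (Sum.elim f w)) = ⊤ := by
  obtain ⟨m, w, hwT, hli, hspan⟩ := hf.exists_sumElim_of_range_subset hfT
  have hm : c - k = m := by
    rw [← hdim, Module.finrank_eq_card_basis (Module.Basis.mk hli (by rw [hspan, hT])),
      Fintype.card_sum, Fintype.card_fin, Fintype.card_fin, Nat.add_sub_cancel_left]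
  exact hm ▸ ⟨w, hwT, hli, hspan.trans hT⟩

end Extension

theorem List.prod_map_pow_update_succ {M ι : Type*} [Monoid M] [DecidableEq ι] {B : ι → M}
    {i : ι} (hcomm : ∀ j, Commute (B j) (B i)) (α : ι → ℕ) {L : List ι} (hL : L.Nodup)
    (hi : i ∈ L) :
    (L.map fun l => B l ^ Function.update α i (α i + 1) l).prod
      = B i * (L.map fun l => B l ^ α l).prod := by
  induction L with
  | nil => simp at hi
  | cons a L ih =>
    obtain ⟨haL, hL⟩ := List.nodup_cons.mp hL
    simp only [List.map_cons, List.prod_cons]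
    rcases List.mem_cons.mp hi with rfl | hi
    · have hrest : (L.map fun l => B l ^ Function.update α i (α i + 1) l)
          = L.map fun l => B l ^ α l :=
        List.map_congr_left fun l hl => by rw [Function.update_of_ne (ne_of_mem_of_not_mem hl haL)]
      rw [hrest, Function.update_self, pow_succ', mul_assoc]
    · rw [ih hL hi, Function.update_of_ne (ne_of_mem_of_not_mem hi haL).symm, ← mul_assoc,
        ← mul_assoc, ((hcomm a).pow_left (α a)).eq]

section Monomial

variable {M : Type*} [Monoid M] {n : ℕ}

def orderedMonomial (B : Fin n → M) (α : Fin n → ℕ) : M :=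
  ((List.finRange n).map fun l => B l ^ α l).prod

@[simp]
theorem orderedMonomial_zero (B : Fin n → M) : orderedMonomial B 0 = 1 := by
  simp [orderedMonomial]

theorem orderedMonomial_update_succ {B : Fin n → M} {i : Fin n}
    (hcomm : ∀ j, Commute (B j) (B i)) (α : Fin n → ℕ) :
    orderedMonomial B (Function.update α i (α i + 1)) = B i * orderedMonomial B α :=
  List.prod_map_pow_update_succ hcomm α (List.nodup_finRange n) (List.mem_finRange i)

end Monomial

section MonomialOrbit

variable {K V ι : Type*} [Semiring K] [AddCommMonoid V] [Module K V] {n : ℕ}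

def monomialOrbit (B : Fin n → Module.End K V) (f : ι → V) : Set V :=
  {x | ∃ (α : Fin n → ℕ) (j : ι), x = orderedMonomial B α (f j)}

theorem range_subset_monomialOrbit (B : Fin n → Module.End K V) (f : ι → V) :
    range f ⊆ monomialOrbit B f := by
  rintro _ ⟨j, rfl⟩
  exact ⟨0, j, by simp⟩

theorem mapsTo_monomialOrbit {B : Fin n → Module.End K V} (hcomm : ∀ i j, Commute (B i) (B j))
    (f : ι → V) (i : Fin n) : MapsTo (B i) (monomialOrbit B f) (monomialOrbit B f) := by
  rintro _ ⟨α, j, rfl⟩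
  exact ⟨Function.update α i (α i + 1), j, by rw [orderedMonomial_update_succ (hcomm · i)]; rfl⟩

end MonomialOrbit

theorem stmt6_general {n r c k : ℕ} {V : Type*} [AddCommGroup V] [Module ℂ V]
    [FiniteDimensional ℂ V] (hdim : Module.finrank ℂ V = c) (hk : k ≤ r)
    (B : Fin n → Module.End ℂ V) (v : Fin r → V)
    (hcomm : ∀ i j, Commute (B i) (B j))
    (hstab : ∀ S : Submodule ℂ V, (∀ i, ∀ x ∈ S, B i x ∈ S) → (∀ j, v j ∈ S) → S = ⊤)
    (hli : LinearIndependent ℂ fun j : Fin k => v (Fin.castLE hk j))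
    (hmax : ∀ j : Fin r,
      v j ∈ Submodule.span ℂ (Set.range fun j' : Fin k => v (Fin.castLE hk j'))) :
    ∃ w : Fin (c - k) → V,
      (∀ i, ∃ (α : Fin n → ℕ) (j : Fin k),
        w i = (((List.finRange n).map fun l => B l ^ α l).prod) (v (Fin.castLE hk j))) ∧
      LinearIndependent ℂ (Sum.elim (fun j : Fin k => v (Fin.castLE hk j)) w) ∧
      Submodule.span ℂ
        (Set.range (Sum.elim (fun j : Fin k => v (Fin.castLE hk j)) w)) = ⊤ := by
  set f : Fin k → V := fun j => v (Fin.castLE hk j)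
  have hspan : span ℂ (monomialOrbit B f) = ⊤ :=
    hstab _ (fun i _ hx => mapsTo_span (mapsTo_monomialOrbit hcomm f i) hx)
      fun j => span_mono (range_subset_monomialOrbit B f) (hmax j)
  obtain ⟨w, hwT, hli', hspan'⟩ :=
    hli.exists_sumElim_basis_of_span_eq_top hdim (range_subset_monomialOrbit B f) hspan
  exact ⟨w, fun i => hwT ⟨i, rfl⟩, hli', hspan'⟩

/-- Given a stable datum with commuting nilpotent `B_i` and `r ≥ n` vectors, if
`v₁,…,v_k` is a maximal linearly independent sublist of the `v_j`'s, then it can be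
completed to a basis of `V` by `c - k` vectors, each of the form
`B₀^{α₀}⋯B_{n-1}^{α_{n-1}} v_j` with `j ≤ k`. -/
theorem stmt6 {n r c k : ℕ} {V : Type*} [AddCommGroup V] [Module ℂ V]
    [FiniteDimensional ℂ V] (hdim : Module.finrank ℂ V = c) (hrn : n ≤ r) (hk : k ≤ r)
    (B : Fin n → Module.End ℂ V) (v : Fin r → V)
    (hcomm : ∀ i j, Commute (B i) (B j)) (hnil : ∀ i, IsNilpotent (B i))
    (hstab : ∀ S : Submodule ℂ V, (∀ i, ∀ x ∈ S, B i x ∈ S) → (∀ j, v j ∈ S) → S = ⊤)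
    (hli : LinearIndependent ℂ fun j : Fin k => v (Fin.castLE hk j))
    (hmax : ∀ j : Fin r,
      v j ∈ Submodule.span ℂ (Set.range fun j' : Fin k => v (Fin.castLE hk j'))) :
    ∃ w : Fin (c - k) → V,
      (∀ i, ∃ (α : Fin n → ℕ) (j : Fin k),
        w i = (((List.finRange n).map fun l => B l ^ α l).prod) (v (Fin.castLE hk j))) ∧
      LinearIndependent ℂ (Sum.elim (fun j : Fin k => v (Fin.castLE hk j)) w) ∧
      Submodule.span ℂ
        (Set.range (Sum.elim (fun j : Fin k => v (Fin.castLE hk j)) w)) = ⊤ :=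
  stmt6_general hdim hk B v hcomm hstab hli hmax
end

section
/- Let V be a complex vector space of dimension c and let X = (B₀,…,B_{n-1},v₁,…,v_c) be a stable datum with the B_i pairwise commuting and nilpotent. Let v₁,…,v_k be a maximal linearly independent sublist of the v_j's and let w₁,…,w_{c-k} complete it to a basis of V, with each w_i in the span of {B₀^{α₀}⋯B_{n-1}^{α_{n-1}}v_j : j ≤ k}. Then for every t ∈ [0,1], the datum φ(t) = (tB₀,…,tB_{n-1}, v₁,…,v_k, (1−t)w₁ + t v_{k+1},…,(1−t)w_{c-k} + t v_c) is stable, the operators tB_i are pairwise commuting and nilpotent, and φ(1) = X, φ(0) = (0,…,0,v₁,…,v_k,w₁,…,w_{c-k}). -/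
/-!
For `t ≠ 0` a subspace invariant under the `t • B i` is invariant under the `B i`; if it contains
`v₁,…,v_k` it contains every `v_j` (they lie in the span of the first `k`), so it is everything by
stability of `X`. For `t = 0` the vectors of `φ(0)` span `V`, so only `V` contains them all.
-/

namespace StableDatum

variable {K V ι κ : Type*} [Field K] [AddCommGroup V] [Module K V]

def IsStable (B : ι → Module.End K V) (v : κ → V) : Prop :=
  ∀ S : Submodule K V, (∀ i, ∀ x ∈ S, B i x ∈ S) → (∀ j, v j ∈ S) → S = ⊤

theorem isStable_of_span_eq_top (B : ι → Module.End K V) {v : κ → V}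
    (hv : Submodule.span K (Set.range v) = ⊤) : IsStable B v := fun _ _ hS =>
  top_unique <| hv ▸ Submodule.span_le.mpr (Set.range_subset_iff.mpr hS)

theorem IsStable.of_mem_span {ι' : Type*} {B : ι → Module.End K V} {v : κ → V} {u : ι' → V}
    (hv : IsStable B v) (hvu : ∀ j, v j ∈ Submodule.span K (Set.range u)) : IsStable B u :=
  fun S hBS huS =>
    hv S hBS fun j => Submodule.span_le.mpr (Set.range_subset_iff.mpr huS) (hvu j)

theorem IsStable.smul {B : ι → Module.End K V} {v : κ → V} (hv : IsStable B v) {a : K}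
    (ha : a ≠ 0) : IsStable (fun i => a • B i) v := fun S hBS hvS =>
  hv S (fun i x hx => (S.smul_mem_iff ha).mp (hBS i x hx)) hvS

variable {c k : ℕ}

/-- The vector part of the paper's `φ(s)`. -/
def interpolate (v : Fin c → V) (w : Fin (c - k) → V) (s : K) : Fin c → V :=
  fun j => if h : (j : ℕ) < k then v j
    else (1 - s) • w ⟨(j : ℕ) - k, Nat.sub_lt_sub_right (not_lt.mp h) j.isLt⟩ + s • v j

variable (hk : k ≤ c) (v : Fin c → V) (w : Fin (c - k) → V)

theorem interpolate_castLE (s : K) (j : Fin k) :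
    interpolate v w s (Fin.castLE hk j) = v (Fin.castLE hk j) := by
  simp [interpolate]

theorem interpolate_one : interpolate v w (1 : K) = v := by
  ext j
  by_cases h : (j : ℕ) < k <;> simp [interpolate, h]

theorem interpolate_zero (j : Fin c) : interpolate v w (0 : K) j =
    if h : (j : ℕ) < k then v j else w ⟨(j : ℕ) - k, Nat.sub_lt_sub_right (not_lt.mp h) j.isLt⟩ := by
  by_cases h : (j : ℕ) < k <;> simp [interpolate, h]

theorem range_castLE_subset_range_interpolate (s : K) :
    Set.range (fun j : Fin k => v (Fin.castLE hk j)) ⊆ Set.range (interpolate v w s) := by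
  rintro _ ⟨j, rfl⟩
  exact ⟨Fin.castLE hk j, interpolate_castLE hk v w s j⟩

theorem range_sumElim_subset_range_interpolate_zero :
    Set.range (Sum.elim (fun j : Fin k => v (Fin.castLE hk j)) w) ⊆
      Set.range (interpolate v w (0 : K)) := by
  rintro _ ⟨j | j, rfl⟩
  · exact ⟨Fin.castLE hk j, interpolate_castLE hk v w 0 j⟩
  · refine ⟨⟨k + j, by omega⟩, ?_⟩
    simp [interpolate_zero]

theorem isStable_interpolate {ι : Type*} {B : ι → Module.End K V} (hstab : IsStable B v)
    (hmax : ∀ j : Fin c,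
      v j ∈ Submodule.span K (Set.range fun j' : Fin k => v (Fin.castLE hk j')))
    (hbspan : Submodule.span K
      (Set.range (Sum.elim (fun j : Fin k => v (Fin.castLE hk j)) w)) = ⊤) (s : K) :
    IsStable (fun i => s • B i) (interpolate v w s) := by
  by_cases hs : s = 0
  · subst hs
    exact isStable_of_span_eq_top _ <| top_unique <|
      hbspan ▸ Submodule.span_mono (range_sumElim_subset_range_interpolate_zero hk v w)
  · exact (hstab.of_mem_span fun j =>
      Submodule.span_mono (range_castLE_subset_range_interpolate hk v w s) (hmax j)).smul hs

end StableDatum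

/-- Along the path `φ(t) = (tB₀,…,tB_{n-1}, v₁,…,v_k, (1−t)w₁+tv_{k+1},…,(1−t)w_{c−k}+tv_c)`,
every datum is stable, with `tB_i` pairwise commuting and nilpotent, and the endpoints are
`φ(1) = X` and `φ(0) = (0-path target data)`. -/
theorem stmt10 {n c k : ℕ} {V : Type*} [AddCommGroup V] [Module ℂ V]
    (hk : k ≤ c)
    (B : Fin n → Module.End ℂ V) (v : Fin c → V) (w : Fin (c - k) → V)
    (hcomm : ∀ i j, Commute (B i) (B j)) (hnil : ∀ i, IsNilpotent (B i))
    (hstab : ∀ S : Submodule ℂ V, (∀ i, ∀ x ∈ S, B i x ∈ S) → (∀ j, v j ∈ S) → S = ⊤)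
    (hmax : ∀ j : Fin c,
      v j ∈ Submodule.span ℂ (Set.range fun j' : Fin k => v (Fin.castLE hk j')))
    (hbspan : Submodule.span ℂ
      (Set.range (Sum.elim (fun j : Fin k => v (Fin.castLE hk j)) w)) = ⊤) :
    ∀ t : ℝ, t ∈ Set.Icc (0 : ℝ) 1 →
      letI u : Fin c → V := fun j =>
        if h : (j : ℕ) < k then v j
        else ((1 : ℂ) - (t : ℂ)) • w ⟨(j : ℕ) - k, by have := j.isLt; omega⟩ + (t : ℂ) • v j
      (∀ i i', Commute ((t : ℂ) • B i) ((t : ℂ) • B i')) ∧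
      (∀ i, IsNilpotent ((t : ℂ) • B i)) ∧
      (∀ S : Submodule ℂ V,
        (∀ i, ∀ x ∈ S, ((t : ℂ) • B i) x ∈ S) → (∀ j, u j ∈ S) → S = ⊤) ∧
      (t = 1 → ∀ j, u j = v j) ∧
      (t = 0 → ∀ j : Fin c, u j =
        if h : (j : ℕ) < k then v j else w ⟨(j : ℕ) - k, by have := j.isLt; omega⟩) := by
  intro t _
  refine ⟨fun i i' => ((hcomm i i').smul_left _).smul_right _, fun i => (hnil i).smul _,
    StableDatum.isStable_interpolate hk v w hstab hmax hbspan (t : ℂ), ?_, ?_⟩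
  · rintro rfl j
    show StableDatum.interpolate v w ((1 : ℝ) : ℂ) j = v j
    rw [Complex.ofReal_one, StableDatum.interpolate_one]
  · rintro rfl j
    show StableDatum.interpolate v w ((0 : ℝ) : ℂ) j = _
    rw [Complex.ofReal_zero, StableDatum.interpolate_zero]
end

section
/- Let V = ℂ^c and consider the monad maps over ℂⁿ (affine chart z_n = 1): α₀ = (B₀ − z₀ I, B₁ − z₁ I, …, B_{n-1} − z_{n-1} I, v₁, …, v_r) viewed as a map V^{⊕n} ⊕ ℂ^r → V depending polynomially on the point (z₀,…,z_{n-1}) ∈ ℂⁿ. Then α₀ is surjective at every point (z₀,…,z_{n-1}) ∈ ℂⁿ if and only if the datum (B₀,…,B_{n-1},v₁,…,v_r) is stable. -/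
/-!
If `S ⊊ V` is invariant under the `B i` and contains the `v j`, the annihilator of `S` is a nonzero
subspace of `V*` invariant under the commuting transposes `B iᵀ`, so it contains a common
eigencovector `φ`, with `φ ∘ B i = z i • φ`. Then `φ` kills the image of `α₀` at `z`, which is
therefore not surjective. Conversely, the image of `α₀` at `z` contains every `v j` and every
`(B i - z i) x`, hence is invariant under each `B i`; stability forces it to be everything.
-/

open Module LinearMap

namespace Module.End

variable {K V ι : Type*} [Field K] [IsAlgClosed K] [AddCommGroup V] [Module K V]
  [FiniteDimensional K V]

theorem exists_common_eigenvector_mem (f : ι → End K V) (hf : ∀ i j, Commute (f i) (f j))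
    (s : Finset ι) {p : Submodule K V} (hp : p ≠ ⊥) (hfp : ∀ i, ∀ x ∈ p, f i x ∈ p) :
    ∃ μ : ι → K, ∃ x ∈ p, x ≠ 0 ∧ ∀ i ∈ s, f i x = μ i • x := by
  classical
  induction s using Finset.induction_on generalizing p with
  | empty =>
    obtain ⟨x, hxp, hx0⟩ := p.ne_bot_iff.mp hp
    exact ⟨0, x, hxp, hx0, by simp⟩
  | insert a s ha ih =>
    have : Nontrivial p := Submodule.nontrivial_iff_ne_bot.mpr hp
    obtain ⟨c, hc⟩ := exists_eigenvalue ((f a).restrict (hfp a))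
    obtain ⟨y, hy⟩ := hc.exists_hasEigenvector
    set q := p ⊓ (f a).eigenspace c
    have hyq : (y : V) ∈ q :=
      ⟨y.2, eigenspace_restrict_le_eigenspace (f a) (hfp a) c ⟨y, hy.1, rfl⟩⟩
    have hq : q ≠ ⊥ := q.ne_bot_iff.mpr ⟨y, hyq, by simpa using hy.2⟩
    have hfq : ∀ i, ∀ x ∈ q, f i x ∈ q := fun i x hx =>
      ⟨hfp i x hx.1, mapsTo_genEigenspace_of_comm (hf a i) c 1 hx.2⟩
    obtain ⟨μ, x, hxq, hx0, hμ⟩ := ih hq hfq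
    refine ⟨Function.update μ a c, x, hxq.1, hx0, Finset.forall_mem_insert _ _ _ |>.mpr ⟨?_, ?_⟩⟩
    · simpa using mem_eigenspace_iff.mp hxq.2
    · intro i hi
      rw [Function.update_of_ne (ne_of_mem_of_not_mem hi ha), hμ i hi]

theorem exists_eigencovector_mem_dualAnnihilator [Fintype ι] {B : ι → End K V}
    (hB : ∀ i j, Commute (B i) (B j)) {S : Submodule K V} (hS : S ≠ ⊤)
    (hBS : ∀ i, ∀ x ∈ S, B i x ∈ S) :
    ∃ z : ι → K, ∃ φ ∈ S.dualAnnihilator, φ ≠ 0 ∧ ∀ i, φ ∘ₗ B i = z i • φ := by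
  have hdual : ∀ i j, Commute (B i).dualMap (B j).dualMap := fun i j => by
    change (B i).dualMap ∘ₗ (B j).dualMap = (B j).dualMap ∘ₗ (B i).dualMap
    rw [dualMap_comp_dualMap, dualMap_comp_dualMap, ← mul_eq_comp, ← mul_eq_comp, (hB i j).eq]
  have hinv : ∀ i, ∀ φ ∈ S.dualAnnihilator, (B i).dualMap φ ∈ S.dualAnnihilator :=
    fun i φ hφ => (Submodule.mem_dualAnnihilator _).mpr fun x hx =>
      (Submodule.mem_dualAnnihilator φ).mp hφ _ (hBS i x hx)
  obtain ⟨z, φ, hφS, hφ0, hφ⟩ := exists_common_eigenvector_mem (fun i => (B i).dualMap) hdual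
    Finset.univ (Submodule.dualAnnihilator_eq_bot_iff.not.mpr hS) hinv
  exact ⟨z, φ, hφS, hφ0, fun i => hφ i (Finset.mem_univ i)⟩

end Module.End

section Monad

variable {K V ι κ : Type*} [Field K] [AddCommGroup V] [Module K V]
  [Fintype ι] [DecidableEq ι] [Fintype κ] (B : ι → End K V) (v : κ → V)

def monadAlpha (z : ι → K) : ((ι → V) × (κ → K)) →ₗ[K] V :=
  (lsum K (fun _ => V) K fun i => B i - z i • 1).coprod (Fintype.linearCombination K v)

theorem coe_monadAlpha (z : ι → K) :
    ⇑(monadAlpha B v z) = fun wa => (∑ i, (B i (wa.1 i) - z i • wa.1 i)) + ∑ j, wa.2 j • v j := by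
  ext wa
  simp [monadAlpha, Finset.sum_sub_distrib, Fintype.linearCombination_apply]

def IsStable : Prop :=
  ∀ S : Submodule K V, (∀ i, ∀ x ∈ S, B i x ∈ S) → (∀ j, v j ∈ S) → S = ⊤

variable {B v}

theorem range_monadAlpha_eq_top [DecidableEq κ] (h : IsStable B v) (z : ι → K) :
    range (monadAlpha B v z) = ⊤ := by
  apply h
  · intro i x hx
    have hBx : B i x = monadAlpha B v z (Pi.single i x, 0) + z i • x := by
      rw [coe_monadAlpha]
      dsimp only
      rw [Fintype.sum_eq_single i fun k hk => by simp [hk]]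
      simp
    rw [hBx]
    exact add_mem (mem_range_self _ _) (Submodule.smul_mem _ _ hx)
  · intro j
    exact ⟨(0, Pi.single j 1), by simp [coe_monadAlpha, Pi.single_apply]⟩

theorem dual_comp_monadAlpha_eq_zero {φ : Dual K V} {z : ι → K}
    (hφB : ∀ i, φ ∘ₗ B i = z i • φ) (hφv : ∀ j, φ (v j) = 0) : φ ∘ₗ monadAlpha B v z = 0 := by
  have hφB' : ∀ i x, φ (B i x) = z i * φ x := fun i x => by
    simpa using LinearMap.congr_fun (hφB i) x
  refine LinearMap.ext fun wa => ?_
  simp [coe_monadAlpha, hφB', hφv]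

theorem surjective_monadAlpha_iff_isStable [IsAlgClosed K] [FiniteDimensional K V]
    (hB : ∀ i j, Commute (B i) (B j)) :
    (∀ z, Function.Surjective (monadAlpha B v z)) ↔ IsStable B v := by
  classical
  refine ⟨fun h S hBS hvS => ?_, fun h z => range_eq_top.mp (range_monadAlpha_eq_top h z)⟩
  by_contra hS
  obtain ⟨z, φ, hφS, hφ0, hφB⟩ := End.exists_eigencovector_mem_dualAnnihilator hB hS hBS
  have hφv : ∀ j, φ (v j) = 0 := fun j => (Submodule.mem_dualAnnihilator φ).mp hφS _ (hvS j)
  exact hφ0 <| (cancel_right (h z)).mp <|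
    (dual_comp_monadAlpha_eq_zero hφB hφv).trans (zero_comp _).symm

end Monad

/-- The monad map `α₀ = (B₀−z₀, …, B_{n-1}−z_{n-1}, v₁, …, v_r)` is surjective at every
point `z ∈ ℂⁿ` if and only if the datum `(B₀,…,B_{n-1},v₁,…,v_r)` is stable. -/
theorem stmt14 {n r : ℕ} {V : Type*} [AddCommGroup V] [Module ℂ V]
    [FiniteDimensional ℂ V] (B : Fin n → Module.End ℂ V) (v : Fin r → V)
    (hcomm : ∀ i j, Commute (B i) (B j)) :
    (∀ z : Fin n → ℂ, Function.Surjective fun wa : (Fin n → V) × (Fin r → ℂ) =>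
        (∑ i, (B i (wa.1 i) - z i • wa.1 i)) + ∑ j, wa.2 j • v j) ↔
      (∀ S : Submodule ℂ V, (∀ i, ∀ x ∈ S, B i x ∈ S) → (∀ j, v j ∈ S) → S = ⊤) := by
  simpa only [coe_monadAlpha, IsStable] using surjective_monadAlpha_iff_isStable (v := v) hcomm
end
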